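/- Interval case of Theorem 3.3: if f_0(I) ∪ f_1(I) = I, then supp(Q) = I = [p_1, p_0]. -/

import Mathlib

open MeasureTheory

/-- `f_0(x) = ((1−ε)/ε)·(π_00 x + π_10)/(π_01 x + π_11)`. -/
noncomputable def f₀ (π00 π01 π10 π11 ε : ℝ) (x : ℝ) : ℝ :=
  ((1 - ε) / ε) * ((π00 * x + π10) / (π01 * x + π11))

/-- `f_1(x) = (ε/(1−ε))·(π_00 x + π_10)/(π_01 x + π_11)`. -/
noncomputable def f₁ (π00 π01 π10 π11 ε : ℝ) (x : ℝ) : ℝ :=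
  (ε / (1 - ε)) * ((π00 * x + π10) / (π01 * x + π11))

/-- `r_0(x) = (((1−ε)π_00 + επ_01)x + ((1−ε)π_10 + επ_11))/(x+1)`. -/
noncomputable def r₀ (π00 π01 π10 π11 ε : ℝ) (x : ℝ) : ℝ :=
  (((1 - ε) * π00 + ε * π01) * x + ((1 - ε) * π10 + ε * π11)) / (x + 1)

/-- `r_1(x) = ((επ_00 + (1−ε)π_01)x + (επ_10 + (1−ε)π_11))/(x+1)`. -/
noncomputable def r₁ (π00 π01 π10 π11 ε : ℝ) (x : ℝ) : ℝ :=
  ((ε * π00 + (1 - ε) * π01) * x + (ε * π10 + (1 - ε) * π11)) / (x + 1)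

/-- `f_b` for a binary symbol `b`. -/
noncomputable def fb (π00 π01 π10 π11 ε : ℝ) (b : Bool) : ℝ → ℝ :=
  if b then f₁ π00 π01 π10 π11 ε else f₀ π00 π01 π10 π11 ε

/-- The support of a measure on `ℝ`: the set of points all of whose open neighborhoods
have positive measure (the smallest closed set of full measure). -/
def measSupp (Q : Measure ℝ) : Set ℝ :=
  {x : ℝ | ∀ U : Set ℝ, IsOpen U → x ∈ U → 0 < Q U}

/-- Blackwell's invariance equation
`Q(E) = ∫_{f_0^{−1}(E)} r_0 dQ + ∫_{f_1^{−1}(E)} r_1 dQ` for Borel `E ⊆ (0,∞)`. -/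
def BlackwellInvariant (π00 π01 π10 π11 ε : ℝ) (Q : Measure ℝ) : Prop :=
  ∀ E : Set ℝ, MeasurableSet E → E ⊆ Set.Ioi (0 : ℝ) →
    Q E = (∫⁻ x in f₀ π00 π01 π10 π11 ε ⁻¹' E, ENNReal.ofReal (r₀ π00 π01 π10 π11 ε x) ∂Q)
      + ∫⁻ x in f₁ π00 π01 π10 π11 ε ⁻¹' E, ENNReal.ofReal (r₁ π00 π01 π10 π11 ε x) ∂Q

/-!
Outside `I = [p₁, p₀]` there is no mass. For `s ≥ 0` invariance gives
`Q (Ioi (f₀ s)) ≤ Q (Ioi s)`, because `r₀ + r₁ = 1` and both `f₀ x` and `f₁ x` exceed `f₀ s` only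
for `x > s`. Above `p₀` the map `f₀` moves points strictly down, so iterating it shows that
`Q (Ioi t)` for `t > p₀` equals the mass above the bounded range of `f₀`, which is `0`. The same
argument with `f₁` and `Ioo 0 t` handles `t < p₁`.

Conversely, since the weights `r_b` are bounded below, the support of `Q` is a nonempty closed
subset of `I` mapped into itself by `f₀` and `f₁`. In the coordinate `log x` both maps are
contractions with the common ratio `τ = (π00 π11 - π01 π10) / (π00 π11 + π01 π10)`. As
`f₀(I) ∪ f₁(I) = I`, every point of `I` is the image of a point of `I` under an `n`-fold
composition of the `f_b`, so its logarithm lies within `τⁿ · diam (log I)` of `log (supp Q)`.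
-/

open Set Filter Topology Real
open scoped NNReal

theorem Antitone.le_of_map_lt_self {β : Type*} [Preorder β] {F : ℝ → β} (hF : Antitone F)
    {g : ℝ → ℝ} {a b : ℝ} (hab : a ≤ b) (hg : ContinuousOn g (Icc a b))
    (hlt : ∀ y ∈ Icc a b, g y < y) (hFg : ∀ y ∈ Icc a b, F (g y) ≤ F y) : F a ≤ F b := by
  obtain ⟨z, hz, hzmin⟩ :=
    isCompact_Icc.exists_isMinOn (nonempty_Icc.2 hab) (continuousOn_id.sub hg)
  set δ := z - g z
  have hδ : 0 < δ := sub_pos.2 (hlt z hz)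
  -- each application of `g` moves a point of `[a, b]` down by at least `δ`
  have key : ∀ n : ℕ, ∀ y ∈ Icc a b, y ≤ a + n * δ → F a ≤ F y := by
    intro n
    induction n with
    | zero =>
      intro y hy hya
      rw [le_antisymm (by simpa using hya) hy.1]
    | succ n ih =>
      intro y hy hya
      refine le_trans ?_ (hFg y hy)
      rcases le_or_gt (g y) a with hgy | hgy
      · exact hF hgy
      · have hgap : δ ≤ y - g y := isMinOn_iff.1 hzmin y hy
        refine ih (g y) ⟨hgy.le, (hlt y hy).le.trans hy.2⟩ ?_
        push_cast at hya
        linarith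
  obtain ⟨n, hn⟩ := exists_nat_ge ((b - a) / δ)
  exact key n b (right_mem_Icc.2 hab) (by rw [div_le_iff₀ hδ] at hn; linarith)

theorem Monotone.le_of_lt_map_self {β : Type*} [Preorder β] {F : ℝ → β} (hF : Monotone F)
    {g : ℝ → ℝ} {a b : ℝ} (hab : a ≤ b) (hg : ContinuousOn g (Icc a b))
    (hlt : ∀ y ∈ Icc a b, y < g y) (hFg : ∀ y ∈ Icc a b, F (g y) ≤ F y) : F b ≤ F a := by
  have hneg : MapsTo Neg.neg (Icc (-b) (-a)) (Icc a b) :=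
    fun y hy => ⟨le_neg.1 hy.2, neg_le.1 hy.1⟩
  have := (hF.comp_antitone fun _ _ h => neg_le_neg h).le_of_map_lt_self
    (g := fun y => -g (-y)) (neg_le_neg hab) (hg.comp continuousOn_neg hneg).neg
    (fun y hy => neg_lt.1 (hlt _ (hneg hy))) (fun y hy => by simpa using hFg _ (hneg hy))
  simpa using this

theorem apply_lt_self_of_unique_fixedPt_lt {f : ℝ → ℝ} {p u L : ℝ} (hp : 0 < p)
    (hf : ContinuousOn f (Ioi 0)) (hL : ∀ x > 0, f x ≤ L)
    (huniq : ∀ q > 0, f q = q → q = p) (hu : p < u) : f u < u := by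
  by_contra! h
  set B := max u (L + 1)
  have hB : f B - B ≤ 0 := by
    linarith [hL B (lt_max_of_lt_left (hp.trans hu)), le_max_right u (L + 1)]
  obtain ⟨w, hw, hfw⟩ := intermediate_value_Icc' (le_max_left u (L + 1))
    ((hf.mono fun x hx => hp.trans (hu.trans_le hx.1)).sub continuousOn_id)
    ⟨hB, sub_nonneg.2 h⟩
  have := huniq w (by linarith [hw.1]) (sub_eq_zero.1 hfw)
  linarith [hw.1]

theorem lt_apply_self_of_lt_unique_fixedPt {f : ℝ → ℝ} {p u : ℝ}
    (hf : ContinuousOn f (Ici 0)) (hf0 : 0 < f 0)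
    (huniq : ∀ q > 0, f q = q → q = p) (hu0 : 0 ≤ u) (hu : u < p) : u < f u := by
  by_contra! h
  obtain ⟨w, hw, hfw⟩ := intermediate_value_Icc' hu0
    ((hf.mono fun x hx => hx.1).sub continuousOn_id) ⟨sub_nonpos.2 h, by simpa using hf0.le⟩
  have hfw : f w = w := sub_eq_zero.1 hfw
  have hw0 : 0 < w := hw.1.lt_of_ne fun h0 => by subst h0; linarith
  linarith [huniq w hw0 hfw, hw.2]

noncomputable def moebius (a b c d x : ℝ) : ℝ := (a * x + b) / (c * x + d)

section Moebius

variable {a b c d : ℝ}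

theorem moebius_pos (ha : 0 ≤ a) (hb : 0 < b) (hc : 0 ≤ c) (hd : 0 < d) {x : ℝ} (hx : 0 ≤ x) :
    0 < moebius a b c d x := by
  unfold moebius; positivity

theorem continuousOn_moebius (hc : 0 ≤ c) (hd : 0 < d) : ContinuousOn (moebius a b c d) (Ici 0) :=
  ContinuousOn.div (by fun_prop) (by fun_prop) fun x hx => by have : (0:ℝ) ≤ x := hx; positivity

theorem strictMonoOn_moebius (hc : 0 ≤ c) (hd : 0 < d) (hdet : b * c < a * d) :
    StrictMonoOn (moebius a b c d) (Ici 0) := by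
  intro x (hx : 0 ≤ x) y (hy : 0 ≤ y) hxy
  unfold moebius
  rw [div_lt_div_iff₀ (by positivity) (by positivity)]
  nlinarith [mul_lt_mul_of_pos_right hdet (sub_pos.2 hxy)]

theorem moebius_lt (hc : 0 < c) (hd : 0 < d) (hdet : b * c < a * d) {x : ℝ} (hx : 0 ≤ x) :
    moebius a b c d x < a / c := by
  unfold moebius
  rw [div_lt_div_iff₀ (by positivity) hc]
  nlinarith

/-- The derivative `x (ad - bc) / ((ax + b)(cx + d))` of `log ∘ moebius` in `log x` is bounded by
the constant, because `(ax + b)(cx + d) ≥ (ad + bc) x`. -/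
theorem lipschitzWith_log_mul_moebius_exp {κ : ℝ} (hκ : 0 < κ) (ha : 0 < a) (hb : 0 < b)
    (hc : 0 < c) (hd : 0 < d) (hdet : b * c < a * d) :
    LipschitzWith ((a * d - b * c) / (a * d + b * c)).toNNReal
      fun s => log (κ * moebius a b c d (exp s)) := by
  have hsplit : (fun s => log (κ * moebius a b c d (exp s)))
      = fun s => log κ + log (a * exp s + b) - log (c * exp s + d) := by
    funext s
    unfold moebius
    rw [log_mul hκ.ne' (by positivity), log_div (by positivity) (by positivity)]
    ring
  have hderiv : ∀ s, HasDerivAt (fun s => log κ + log (a * exp s + b) - log (c * exp s + d))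
      (a * exp s / (a * exp s + b) - c * exp s / (c * exp s + d)) s := fun s =>
    ((((hasDerivAt_exp s).const_mul a).add_const b).log (by positivity)).const_add (log κ)
      |>.sub ((((hasDerivAt_exp s).const_mul c).add_const d).log (by positivity))
  rw [hsplit]
  refine lipschitzWith_of_nnnorm_deriv_le (fun s => (hderiv s).differentiableAt) fun s => ?_
  have hx := exp_pos s
  have hD : a * exp s / (a * exp s + b) - c * exp s / (c * exp s + d)
      = exp s * (a * d - b * c) / ((a * exp s + b) * (c * exp s + d)) := by
    field_simp
    ring
  have hD0 : 0 ≤ exp s * (a * d - b * c) / ((a * exp s + b) * (c * exp s + d)) :=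
    div_nonneg (mul_nonneg hx.le (by linarith)) (by positivity)
  rw [(hderiv s).deriv, hD, ← NNReal.coe_le_coe, coe_nnnorm, Real.norm_of_nonneg hD0,
    Real.coe_toNNReal _ (div_nonneg (by linarith) (by positivity)),
    div_le_div_iff₀ (by positivity) (by positivity)]
  nlinarith [mul_pos (mul_pos ha hc) (mul_pos hx hx), mul_pos hb hd, mul_pos hx (sub_pos.2 hdet)]

end Moebius

theorem subset_closure_of_subset_iUnion_image {X ι : Type*} [PseudoMetricSpace X]
    {φ : ι → X → X} {τ : ℝ≥0} (hτ : τ < 1) {K S : Set X} (hK : Bornology.IsBounded K)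
    (hφ : ∀ i, LipschitzOnWith τ (φ i) K) (hKφ : K ⊆ ⋃ i, φ i '' K) (hSK : S ⊆ K)
    (hS : S.Nonempty) (hφS : ∀ i, MapsTo (φ i) S S) : K ⊆ closure S := by
  have approx : ∀ n : ℕ, ∀ y ∈ K, ∃ s ∈ S, dist y s ≤ τ ^ n * Metric.diam K := by
    intro n
    induction n with
    | zero =>
      obtain ⟨s, hs⟩ := hS
      exact fun y hy => ⟨s, hs, by simpa using Metric.dist_le_diam_of_mem hK hy (hSK hs)⟩
    | succ n ih =>
      intro y hy
      obtain ⟨i, z, hz, rfl⟩ := mem_iUnion.1 (hKφ hy)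
      obtain ⟨s, hs, hzs⟩ := ih z hz
      refine ⟨φ i s, hφS i hs, ?_⟩
      calc dist (φ i z) (φ i s) ≤ τ * dist z s := (hφ i).dist_le_mul z hz s (hSK hs)
        _ ≤ τ * (τ ^ n * Metric.diam K) := by gcongr
        _ = τ ^ (n + 1) * Metric.diam K := by ring
  intro y hy
  refine Metric.mem_closure_iff.2 fun δ hδ => ?_
  obtain ⟨n, hn⟩ := (((tendsto_pow_atTop_nhds_zero_of_lt_one τ.2 hτ).mul_const
    (Metric.diam K)).eventually (gt_mem_nhds (by simpa using hδ))).exists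
  obtain ⟨s, hs, hys⟩ := approx n y hy
  exact ⟨s, hs, hys.trans_lt hn⟩

theorem Icc_subset_of_lipschitzWith_log {ι : Type*} {f : ι → ℝ → ℝ} {τ : ℝ≥0} (hτ : τ < 1)
    (hf : ∀ i, LipschitzWith τ fun s => log (f i (exp s))) {p q : ℝ} (hp : 0 < p)
    (hI : Icc p q ⊆ ⋃ i, f i '' Icc p q) {S : Set ℝ} (hS : IsClosed S) (hSne : S.Nonempty)
    (hSI : S ⊆ Icc p q) (hfS : ∀ i, MapsTo (f i) S S) : Icc p q ⊆ S := by
  have hpos : ∀ x ∈ Icc p q, 0 < x := fun x hx => hp.trans_le hx.1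
  have hlog : closure (log '' S) ⊇ log '' Icc p q := by
    refine subset_closure_of_subset_iUnion_image hτ
      (isCompact_Icc.image_of_continuousOn
        (continuousOn_log.mono fun x hx => (hpos x hx).ne')).isBounded
      (fun i => (hf i).lipschitzOnWith) ?_ (image_mono hSI) (hSne.image log) ?_
    · rintro _ ⟨y, hy, rfl⟩
      obtain ⟨i, z, hz, rfl⟩ := mem_iUnion.1 (hI hy)
      exact mem_iUnion.2 ⟨i, log z, mem_image_of_mem log hz, by simp only [exp_log (hpos z hz)]⟩
    · rintro i _ ⟨x, hx, rfl⟩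
      exact ⟨f i x, hfS i hx, by simp only [exp_log (hpos x (hSI hx))]⟩
  have hexp : exp '' (log '' S) = S := by
    rw [image_image]
    exact (image_congr fun x hx => exp_log (hpos x (hSI hx))).trans (image_id S)
  intro y hy
  rw [← hS.closure_eq, ← hexp, ← exp_log (hpos y hy)]
  exact image_closure_subset_closure_image continuous_exp
    (mem_image_of_mem exp (hlog (mem_image_of_mem log hy)))

structure BlackwellParams (π00 π01 π10 π11 ε : ℝ) : Prop where
  pos00 : 0 < π00
  pos01 : 0 < π01
  pos10 : 0 < π10
  pos11 : 0 < π11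
  det_pos : 0 < π00 * π11 - π01 * π10
  eps_pos : 0 < ε
  eps_lt_half : ε < 1 / 2

theorem r₀_add_r₁ {π00 π01 π10 π11 ε x : ℝ} (hrow0 : π00 + π01 = 1) (hrow1 : π10 + π11 = 1)
    (hx : x + 1 ≠ 0) : r₀ π00 π01 π10 π11 ε x + r₁ π00 π01 π10 π11 ε x = 1 := by
  rw [r₀, r₁, ← add_div, div_eq_one_iff_eq hx]
  linear_combination x * hrow0 + hrow1

theorem min_le_mul_add_div_add_one {α β x : ℝ} (hx : 0 ≤ x) :
    min α β ≤ (α * x + β) / (x + 1) := by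
  rw [le_div_iff₀ (by linarith)]
  nlinarith [mul_le_mul_of_nonneg_right (min_le_left α β) hx, min_le_right α β]

namespace BlackwellParams

variable {π00 π01 π10 π11 ε : ℝ}

theorem one_sub_eps_pos (hP : BlackwellParams π00 π01 π10 π11 ε) : 0 < 1 - ε := by
  linarith [hP.eps_lt_half]

theorem moebius_det (hP : BlackwellParams π00 π01 π10 π11 ε) : π10 * π01 < π00 * π11 := by
  linarith [hP.det_pos]

theorem exists_fb_eq_mul_moebius (hP : BlackwellParams π00 π01 π10 π11 ε) (b : Bool) :
    ∃ κ > 0, fb π00 π01 π10 π11 ε b = fun x => κ * moebius π00 π10 π01 π11 x := by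
  cases b
  · exact ⟨_, div_pos hP.one_sub_eps_pos hP.eps_pos, rfl⟩
  · exact ⟨_, div_pos hP.eps_pos hP.one_sub_eps_pos, rfl⟩

theorem fb_pos (hP : BlackwellParams π00 π01 π10 π11 ε) (b : Bool) {x : ℝ} (hx : 0 ≤ x) :
    0 < fb π00 π01 π10 π11 ε b x := by
  obtain ⟨κ, hκ, h⟩ := hP.exists_fb_eq_mul_moebius b
  rw [h]
  exact mul_pos hκ (moebius_pos hP.pos00.le hP.pos10 hP.pos01.le hP.pos11 hx)

theorem strictMonoOn_fb (hP : BlackwellParams π00 π01 π10 π11 ε) (b : Bool) :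
    StrictMonoOn (fb π00 π01 π10 π11 ε b) (Ici 0) := by
  obtain ⟨κ, hκ, h⟩ := hP.exists_fb_eq_mul_moebius b
  rw [h]
  exact fun x hx y hy hxy => mul_lt_mul_of_pos_left
    (strictMonoOn_moebius hP.pos01.le hP.pos11 hP.moebius_det hx hy hxy) hκ

theorem continuousOn_fb (hP : BlackwellParams π00 π01 π10 π11 ε) (b : Bool) :
    ContinuousOn (fb π00 π01 π10 π11 ε b) (Ici 0) := by
  obtain ⟨κ, -, h⟩ := hP.exists_fb_eq_mul_moebius b
  rw [h]
  exact continuousOn_const.mul (continuousOn_moebius hP.pos01.le hP.pos11)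

theorem lipschitzWith_log_fb (hP : BlackwellParams π00 π01 π10 π11 ε) (b : Bool) :
    LipschitzWith ((π00 * π11 - π10 * π01) / (π00 * π11 + π10 * π01)).toNNReal
      fun s => log (fb π00 π01 π10 π11 ε b (exp s)) := by
  obtain ⟨κ, hκ, h⟩ := hP.exists_fb_eq_mul_moebius b
  rw [h]
  exact lipschitzWith_log_mul_moebius_exp hκ hP.pos00 hP.pos10 hP.pos01 hP.pos11 hP.moebius_det

theorem contraction_lt_one (hP : BlackwellParams π00 π01 π10 π11 ε) :
    ((π00 * π11 - π10 * π01) / (π00 * π11 + π10 * π01)).toNNReal < 1 := by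
  rw [Real.toNNReal_lt_one, div_lt_one (by nlinarith [hP.pos00, hP.pos11, hP.pos10, hP.pos01])]
  nlinarith [mul_pos hP.pos10 hP.pos01]

theorem f₁_lt_f₀ (hP : BlackwellParams π00 π01 π10 π11 ε) {x : ℝ} (hx : 0 ≤ x) :
    f₁ π00 π01 π10 π11 ε x < f₀ π00 π01 π10 π11 ε x := by
  have h1ε := hP.one_sub_eps_pos
  refine mul_lt_mul_of_pos_right ?_ (moebius_pos hP.pos00.le hP.pos10 hP.pos01.le hP.pos11 hx)
  rw [div_lt_div_iff₀ h1ε hP.eps_pos]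
  nlinarith [hP.eps_pos, hP.eps_lt_half]

theorem f₀_lt (hP : BlackwellParams π00 π01 π10 π11 ε) {x : ℝ} (hx : 0 ≤ x) :
    f₀ π00 π01 π10 π11 ε x < (1 - ε) / ε * (π00 / π01) :=
  mul_lt_mul_of_pos_left (moebius_lt hP.pos01 hP.pos11 hP.moebius_det hx)
    (div_pos hP.one_sub_eps_pos hP.eps_pos)

theorem exists_pos_le_r₀ (hP : BlackwellParams π00 π01 π10 π11 ε) :
    ∃ c > 0, ∀ x ≥ 0, c ≤ r₀ π00 π01 π10 π11 ε x := by
  have h1ε := hP.one_sub_eps_pos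
  obtain ⟨h00, h01, h10, h11, -, hε0, -⟩ := hP
  exact ⟨_, lt_min (by positivity) (by positivity), fun x hx => min_le_mul_add_div_add_one hx⟩

theorem exists_pos_le_r₁ (hP : BlackwellParams π00 π01 π10 π11 ε) :
    ∃ c > 0, ∀ x ≥ 0, c ≤ r₁ π00 π01 π10 π11 ε x := by
  have h1ε := hP.one_sub_eps_pos
  obtain ⟨h00, h01, h10, h11, -, hε0, -⟩ := hP
  exact ⟨_, lt_min (by positivity) (by positivity), fun x hx => min_le_mul_add_div_add_one hx⟩

end BlackwellParams

theorem measSupp_eq_support (Q : Measure ℝ) : measSupp Q = Q.support := by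
  rw [Measure.support_eq_forall_isOpen]
  exact Set.ext fun x => forall_congr' fun U => imp.swap

theorem support_subset_Icc_of_measure_Iio_Ioi {μ : Measure ℝ} {a b : ℝ}
    (ha : ∀ t < a, μ (Iio t) = 0) (hb : ∀ t > b, μ (Ioi t) = 0) : μ.support ⊆ Icc a b := by
  intro x hx
  rw [Measure.mem_support_iff_forall] at hx
  constructor
  · by_contra! h
    obtain ⟨t, hxt, hta⟩ := exists_between h
    exact (hx _ (Iio_mem_nhds hxt)).ne' (ha t hta)
  · by_contra! h
    obtain ⟨t, hbt, htx⟩ := exists_between h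
    exact (hx _ (Ioi_mem_nhds htx)).ne' (hb t hbt)

theorem apply_mem_support_of_setLIntegral_le {Q : Measure ℝ} {f r : ℝ → ℝ} {c : ℝ} (hc : 0 < c)
    (hr : ∀ x > 0, c ≤ r x) (hf : ContinuousOn f (Ioi 0)) (hfpos : ∀ x > 0, 0 < f x)
    (hQ : ∀ E, MeasurableSet E → E ⊆ Ioi 0 → ∫⁻ x in f ⁻¹' E, ENNReal.ofReal (r x) ∂Q ≤ Q E)
    {x : ℝ} (hx : x ∈ Q.support) (hx0 : 0 < x) : f x ∈ Q.support := by
  rw [Measure.mem_support_iff_forall] at hx ⊢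
  intro U hU
  set E := interior U ∩ Ioi 0
  have hE : IsOpen E := isOpen_interior.inter isOpen_Ioi
  set W := Ioi 0 ∩ f ⁻¹' E
  have hW : IsOpen W := hf.isOpen_inter_preimage isOpen_Ioi hE
  have hxW : x ∈ W := ⟨hx0, mem_interior_iff_mem_nhds.2 hU, hfpos x hx0⟩
  calc 0 < ENNReal.ofReal c * Q W :=
        ENNReal.mul_pos (ENNReal.ofReal_pos.2 hc).ne' (hx W (hW.mem_nhds hxW)).ne'
    _ = ∫⁻ _ in W, ENNReal.ofReal c ∂Q := (setLIntegral_const _ _).symm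
    _ ≤ ∫⁻ y in W, ENNReal.ofReal (r y) ∂Q :=
        setLIntegral_mono' hW.measurableSet fun y hy => ENNReal.ofReal_le_ofReal (hr y hy.1)
    _ ≤ ∫⁻ y in f ⁻¹' E, ENNReal.ofReal (r y) ∂Q := lintegral_mono_set inter_subset_right
    _ ≤ Q E := hQ E hE.measurableSet inter_subset_right
    _ ≤ Q U := measure_mono (inter_subset_left.trans interior_subset)

namespace BlackwellInvariant

variable {π00 π01 π10 π11 ε : ℝ} {Q : Measure ℝ}

theorem setLIntegral_r₀_le (hQ : BlackwellInvariant π00 π01 π10 π11 ε Q) {E : Set ℝ}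
    (hE : MeasurableSet E) (hE0 : E ⊆ Ioi 0) :
    ∫⁻ x in f₀ π00 π01 π10 π11 ε ⁻¹' E, ENNReal.ofReal (r₀ π00 π01 π10 π11 ε x) ∂Q ≤ Q E := by
  rw [hQ E hE hE0]
  exact le_self_add

theorem setLIntegral_r₁_le (hQ : BlackwellInvariant π00 π01 π10 π11 ε Q) {E : Set ℝ}
    (hE : MeasurableSet E) (hE0 : E ⊆ Ioi 0) :
    ∫⁻ x in f₁ π00 π01 π10 π11 ε ⁻¹' E, ENNReal.ofReal (r₁ π00 π01 π10 π11 ε x) ∂Q ≤ Q E := by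
  rw [hQ E hE hE0]
  exact le_add_self

theorem fb_mem_support (hQ : BlackwellInvariant π00 π01 π10 π11 ε Q)
    (hP : BlackwellParams π00 π01 π10 π11 ε) (b : Bool) {x : ℝ} (hx : x ∈ Q.support)
    (hx0 : 0 < x) : fb π00 π01 π10 π11 ε b x ∈ Q.support := by
  have hf := (hP.continuousOn_fb b).mono (Ioi_subset_Ici_self (a := (0 : ℝ)))
  have hfpos : ∀ y > 0, 0 < fb π00 π01 π10 π11 ε b y := fun y hy => hP.fb_pos b hy.le
  cases b
  · obtain ⟨c, hc, hr⟩ := hP.exists_pos_le_r₀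
    exact apply_mem_support_of_setLIntegral_le hc (fun y hy => hr y hy.le) hf hfpos
      (fun E hE hE0 => hQ.setLIntegral_r₀_le hE hE0) hx hx0
  · obtain ⟨c, hc, hr⟩ := hP.exists_pos_le_r₁
    exact apply_mem_support_of_setLIntegral_le hc (fun y hy => hr y hy.le) hf hfpos
      (fun E hE hE0 => hQ.setLIntegral_r₁_le hE hE0) hx hx0

theorem measure_le_of_preimage_subset (hQ : BlackwellInvariant π00 π01 π10 π11 ε Q)
    (hP : BlackwellParams π00 π01 π10 π11 ε) (hrow0 : π00 + π01 = 1) (hrow1 : π10 + π11 = 1)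
    (hQ0 : Q (Iic 0) = 0) {E B : Set ℝ} (hE : MeasurableSet E) (hE0 : E ⊆ Ioi 0)
    (hB : MeasurableSet B) (h₀ : ∀ x > 0, f₀ π00 π01 π10 π11 ε x ∈ E → x ∈ B)
    (h₁ : ∀ x > 0, f₁ π00 π01 π10 π11 ε x ∈ E → x ∈ B) : Q E ≤ Q B := by
  have hpos : ∀ᵐ x ∂Q, 0 < x := by
    rw [ae_iff]
    simpa [Iic] using hQ0
  obtain ⟨c₀, hc₀, hr₀⟩ := hP.exists_pos_le_r₀
  obtain ⟨c₁, hc₁, hr₁⟩ := hP.exists_pos_le_r₁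
  have hsum : ∀ᵐ x ∂Q, x ∈ B → ENNReal.ofReal (r₀ π00 π01 π10 π11 ε x)
      + ENNReal.ofReal (r₁ π00 π01 π10 π11 ε x) = 1 := by
    filter_upwards [hpos] with x hx _
    rw [← ENNReal.ofReal_add (hc₀.le.trans (hr₀ x hx.le)) (hc₁.le.trans (hr₁ x hx.le)),
      r₀_add_r₁ hrow0 hrow1 (by linarith), ENNReal.ofReal_one]
  calc Q E = _ := hQ E hE hE0
    _ ≤ ∫⁻ x in B, ENNReal.ofReal (r₀ π00 π01 π10 π11 ε x) ∂Q
        + ∫⁻ x in B, ENNReal.ofReal (r₁ π00 π01 π10 π11 ε x) ∂Q := by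
      gcongr ?_ + ?_
      · exact lintegral_mono_set' (by filter_upwards [hpos] with x hx using h₀ x hx)
      · exact lintegral_mono_set' (by filter_upwards [hpos] with x hx using h₁ x hx)
    _ = ∫⁻ x in B, 1 ∂Q := by
      rw [← lintegral_add_left (by unfold r₀; fun_prop)]
      exact setLIntegral_congr_fun_ae hB hsum
    _ = Q B := setLIntegral_one B

theorem measure_Ioi_f₀_le (hQ : BlackwellInvariant π00 π01 π10 π11 ε Q)
    (hP : BlackwellParams π00 π01 π10 π11 ε) (hrow0 : π00 + π01 = 1) (hrow1 : π10 + π11 = 1)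
    (hQ0 : Q (Iic 0) = 0) {s : ℝ} (hs : 0 ≤ s) :
    Q (Ioi (f₀ π00 π01 π10 π11 ε s)) ≤ Q (Ioi s) := by
  have hmono := hP.strictMonoOn_fb false
  refine hQ.measure_le_of_preimage_subset hP hrow0 hrow1 hQ0 measurableSet_Ioi
    (Ioi_subset_Ioi (hP.fb_pos false hs).le) measurableSet_Ioi
    (fun x hx hfx => (hmono.lt_iff_lt hs hx.le).1 hfx) fun x hx hfx => ?_
  exact (hmono.lt_iff_lt hs hx.le).1 (lt_trans hfx (hP.f₁_lt_f₀ hx.le))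

theorem measure_Ioi_f₀_bound_eq_zero (hQ : BlackwellInvariant π00 π01 π10 π11 ε Q)
    (hP : BlackwellParams π00 π01 π10 π11 ε) (hrow0 : π00 + π01 = 1) (hrow1 : π10 + π11 = 1)
    (hQ0 : Q (Iic 0) = 0) : Q (Ioi ((1 - ε) / ε * (π00 / π01))) = 0 := by
  have hL : 0 < (1 - ε) / ε * (π00 / π01) :=
    mul_pos (div_pos hP.one_sub_eps_pos hP.eps_pos) (div_pos hP.pos00 hP.pos01)
  refine le_antisymm ?_ bot_le
  simpa using hQ.measure_le_of_preimage_subset hP hrow0 hrow1 hQ0 measurableSet_Ioi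
    (Ioi_subset_Ioi hL.le) MeasurableSet.empty
    (fun x hx hfx => (hP.f₀_lt hx.le).not_gt hfx)
    (fun x hx hfx => (hP.f₀_lt hx.le).not_gt (hfx.trans (hP.f₁_lt_f₀ hx.le)))

theorem measure_Ioo_f₁_le (hQ : BlackwellInvariant π00 π01 π10 π11 ε Q)
    (hP : BlackwellParams π00 π01 π10 π11 ε) (hrow0 : π00 + π01 = 1) (hrow1 : π10 + π11 = 1)
    (hQ0 : Q (Iic 0) = 0) {s : ℝ} (hs : 0 ≤ s) :
    Q (Ioo 0 (f₁ π00 π01 π10 π11 ε s)) ≤ Q (Ioo 0 s) := by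
  have hmono := hP.strictMonoOn_fb true
  refine hQ.measure_le_of_preimage_subset hP hrow0 hrow1 hQ0 measurableSet_Ioo
    (fun _ hx => hx.1) measurableSet_Ioo
    (fun x hx hfx => ⟨hx, (hmono.lt_iff_lt hx.le hs).1 ((hP.f₁_lt_f₀ hx.le).trans hfx.2)⟩)
    fun x hx hfx => ⟨hx, (hmono.lt_iff_lt hx.le hs).1 hfx.2⟩

theorem measure_Ioo_f₁_zero_eq_zero (hQ : BlackwellInvariant π00 π01 π10 π11 ε Q)
    (hP : BlackwellParams π00 π01 π10 π11 ε) (hrow0 : π00 + π01 = 1) (hrow1 : π10 + π11 = 1)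
    (hQ0 : Q (Iic 0) = 0) : Q (Ioo 0 (f₁ π00 π01 π10 π11 ε 0)) = 0 := by
  have hmono := hP.strictMonoOn_fb true
  have hlt : ∀ x > 0, f₁ π00 π01 π10 π11 ε 0 < f₁ π00 π01 π10 π11 ε x :=
    fun x hx => hmono self_mem_Ici hx.le hx
  refine le_antisymm ?_ bot_le
  simpa using hQ.measure_le_of_preimage_subset hP hrow0 hrow1 hQ0 measurableSet_Ioo
    (fun _ hx => hx.1) MeasurableSet.empty
    (fun x hx hfx => ((hlt x hx).trans (hP.f₁_lt_f₀ hx.le)).not_gt hfx.2)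
    (fun x hx hfx => (hlt x hx).not_gt hfx.2)

theorem measure_Ioi_eq_zero (hQ : BlackwellInvariant π00 π01 π10 π11 ε Q)
    (hP : BlackwellParams π00 π01 π10 π11 ε) (hrow0 : π00 + π01 = 1) (hrow1 : π10 + π11 = 1)
    (hQ0 : Q (Iic 0) = 0) {p₀ : ℝ} (hp₀ : 0 < p₀)
    (huniq₀ : ∀ q : ℝ, 0 < q → f₀ π00 π01 π10 π11 ε q = q → q = p₀) {t : ℝ} (ht : p₀ < t) :
    Q (Ioi t) = 0 := by
  set L := (1 - ε) / ε * (π00 / π01)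
  have hL := hQ.measure_Ioi_f₀_bound_eq_zero hP hrow0 hrow1 hQ0
  rcases le_total L t with hLt | htL
  · exact measure_mono_null (Ioi_subset_Ioi hLt) hL
  have hcont : ContinuousOn (f₀ π00 π01 π10 π11 ε) (Ioi 0) :=
    (hP.continuousOn_fb false).mono Ioi_subset_Ici_self
  have hpos : ∀ y ∈ Icc t L, 0 < y := fun y hy => hp₀.trans (ht.trans_le hy.1)
  have hanti : Antitone fun y => Q (Ioi y) := fun _ _ h => measure_mono (Ioi_subset_Ioi h)
  refine le_antisymm (le_trans ?_ hL.le) bot_le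
  exact hanti.le_of_map_lt_self htL (hcont.mono hpos)
      (fun y hy => apply_lt_self_of_unique_fixedPt_lt hp₀ hcont
        (fun x hx => (hP.f₀_lt hx.le).le) huniq₀ (ht.trans_le hy.1))
      (fun y hy => hQ.measure_Ioi_f₀_le hP hrow0 hrow1 hQ0 (hpos y hy).le)

theorem measure_Iio_eq_zero (hQ : BlackwellInvariant π00 π01 π10 π11 ε Q)
    (hP : BlackwellParams π00 π01 π10 π11 ε) (hrow0 : π00 + π01 = 1) (hrow1 : π10 + π11 = 1)
    (hQ0 : Q (Iic 0) = 0) {p₁ : ℝ}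
    (huniq₁ : ∀ q : ℝ, 0 < q → f₁ π00 π01 π10 π11 ε q = q → q = p₁) {t : ℝ} (ht : t < p₁) :
    Q (Iio t) = 0 := by
  set m := f₁ π00 π01 π10 π11 ε 0
  have hm := hQ.measure_Ioo_f₁_zero_eq_zero hP hrow0 hrow1 hQ0
  have hm0 : 0 < m := hP.fb_pos true le_rfl
  have hIoo : Q (Ioo 0 t) = 0 := by
    rcases le_total t m with htm | hmt
    · exact measure_mono_null (Ioo_subset_Ioo_right htm) hm
    have hpos : ∀ y ∈ Icc m t, 0 ≤ y := fun y hy => hm0.le.trans hy.1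
    have hmono : Monotone fun y => Q (Ioo 0 y) := fun _ _ h => measure_mono (Ioo_subset_Ioo_right h)
    refine le_antisymm (le_trans ?_ hm.le) bot_le
    exact hmono.le_of_lt_map_self hmt ((hP.continuousOn_fb true).mono hpos)
        (fun y hy => lt_apply_self_of_lt_unique_fixedPt (hP.continuousOn_fb true) hm0 huniq₁
          (hpos y hy) (hy.2.trans_lt ht))
        (fun y hy => hQ.measure_Ioo_f₁_le hP hrow0 hrow1 hQ0 (hpos y hy))
  refine measure_mono_null (fun x hx => ?_) (measure_union_null hQ0 hIoo)
  rcases le_or_gt x 0 with hx0 | hx0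
  exacts [Or.inl hx0, Or.inr ⟨hx0, hx⟩]

end BlackwellInvariant

theorem support_blackwell_interval_general (π00 π01 π10 π11 ε : ℝ)
    (h00 : 0 < π00) (h01 : 0 < π01) (h10 : 0 < π10) (h11 : 0 < π11)
    (hrow0 : π00 + π01 = 1) (hrow1 : π10 + π11 = 1)
    (hdet : 0 < π00 * π11 - π01 * π10)
    (hε0 : 0 < ε) (hε : ε < 1 / 2)
    (p₀ p₁ : ℝ) (hp₀ : 0 < p₀) (hp₁ : 0 < p₁)
    (huniq₀ : ∀ q : ℝ, 0 < q → f₀ π00 π01 π10 π11 ε q = q → q = p₀)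
    (huniq₁ : ∀ q : ℝ, 0 < q → f₁ π00 π01 π10 π11 ε q = q → q = p₁)
    (Q : MeasureTheory.Measure ℝ) [MeasureTheory.IsProbabilityMeasure Q]
    (hQpos : Q (Set.Ioi 0) = 1)
    (hQinv : BlackwellInvariant π00 π01 π10 π11 ε Q)
    (hoverlap :
      (f₀ π00 π01 π10 π11 ε '' Set.Icc p₁ p₀ ∪ f₁ π00 π01 π10 π11 ε '' Set.Icc p₁ p₀)
        = Set.Icc p₁ p₀) :
    measSupp Q = Set.Icc p₁ p₀ := by
  have hP : BlackwellParams π00 π01 π10 π11 ε := ⟨h00, h01, h10, h11, hdet, hε0, hε⟩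
  have hQ0 : Q (Iic 0) = 0 := by
    rw [← compl_Ioi, prob_compl_eq_zero_iff measurableSet_Ioi, hQpos]
  have hsupp : Q.support ⊆ Icc p₁ p₀ := support_subset_Icc_of_measure_Iio_Ioi
    (fun _ => hQinv.measure_Iio_eq_zero hP hrow0 hrow1 hQ0 huniq₁)
    (fun _ => hQinv.measure_Ioi_eq_zero hP hrow0 hrow1 hQ0 hp₀ huniq₀)
  have hcover : Icc p₁ p₀ ⊆ ⋃ b, fb π00 π01 π10 π11 ε b '' Icc p₁ p₀ := by
    intro y hy
    rw [← hoverlap] at hy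
    rcases hy with hy | hy
    exacts [mem_iUnion.2 ⟨false, hy⟩, mem_iUnion.2 ⟨true, hy⟩]
  rw [measSupp_eq_support]
  refine hsupp.antisymm (Icc_subset_of_lipschitzWith_log hP.contraction_lt_one
    hP.lipschitzWith_log_fb hp₁ hcover Q.isClosed_support
    (Q.nonempty_support (IsProbabilityMeasure.ne_zero Q)) hsupp ?_)
  exact fun b x hx => hQinv.fb_mem_support hP b hx (hp₁.trans_le (hsupp hx).1)

/-- Interval case of Theorem 3.3: if `f_0(I) ∪ f_1(I) = I`, then
`supp(Q) = I = [p_1, p_0]`. -/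
theorem support_blackwell_interval (π00 π01 π10 π11 ε : ℝ)
    (h00 : 0 < π00) (h01 : 0 < π01) (h10 : 0 < π10) (h11 : 0 < π11)
    (hrow0 : π00 + π01 = 1) (hrow1 : π10 + π11 = 1)
    (hdet : 0 < π00 * π11 - π01 * π10)
    (hε0 : 0 < ε) (hε : ε < 1 / 2)
    (p₀ p₁ : ℝ) (hp₀ : 0 < p₀) (hp₁ : 0 < p₁)
    (hfix₀ : f₀ π00 π01 π10 π11 ε p₀ = p₀) (hfix₁ : f₁ π00 π01 π10 π11 ε p₁ = p₁)
    (huniq₀ : ∀ q : ℝ, 0 < q → f₀ π00 π01 π10 π11 ε q = q → q = p₀)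
    (huniq₁ : ∀ q : ℝ, 0 < q → f₁ π00 π01 π10 π11 ε q = q → q = p₁)
    (Q : MeasureTheory.Measure ℝ) [MeasureTheory.IsProbabilityMeasure Q]
    (hQpos : Q (Set.Ioi 0) = 1)
    (hQinv : BlackwellInvariant π00 π01 π10 π11 ε Q)
    (hoverlap :
      (f₀ π00 π01 π10 π11 ε '' Set.Icc p₁ p₀ ∪ f₁ π00 π01 π10 π11 ε '' Set.Icc p₁ p₀)
        = Set.Icc p₁ p₀) :
    measSupp Q = Set.Icc p₁ p₀ :=
  support_blackwell_interval_general π00 π01 π10 π11 ε h00 h01 h10 h11 hrow0 hrow1 hdet hε0 hε p₀ p₁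
    hp₀ hp₁ huniq₀ huniq₁ Q hQpos hQinv hoverlap
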